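/- arXiv:1907.12130 — 4 statements merged into one kernel-verified Lean document; each statement's English description precedes it below -/
import Mathlib

section
/- A set D ⊆ O is a diagnosis for a DPI if and only if D hits every conflict for the DPI, i.e., D ∩ C ≠ ∅ for every conflict C ⊆ O. -/
open Set

variable {α : Type*}

/-- `C` is a conflict for the DPI `(O, B, P, N)` wrt entailment `Ent` and falsum `bot`. -/
def IsConflict (Ent : Set α → α → Prop) (bot : α) (O B P N C : Set α) : Prop :=
  C ⊆ O ∧ ∃ x ∈ N ∪ {bot}, Ent (C ∪ B ∪ P) x

/-- `C` is a minimal conflict. -/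
def IsMinConflict (Ent : Set α → α → Prop) (bot : α) (O B P N C : Set α) : Prop :=
  IsConflict Ent bot O B P N C ∧ ∀ C' ⊂ C, ¬ IsConflict Ent bot O B P N C'

/-- `D` is a diagnosis for the DPI `(O, B, P, N)`. -/
def IsDiagnosis (Ent : Set α → α → Prop) (bot : α) (O B P N D : Set α) : Prop :=
  D ⊆ O ∧ ∀ x ∈ N ∪ {bot}, ¬ Ent ((O \ D) ∪ B ∪ P) x

/-- `D` is a minimal diagnosis. -/
def IsMinDiagnosis (Ent : Set α → α → Prop) (bot : α) (O B P N D : Set α) : Prop :=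
  IsDiagnosis Ent bot O B P N D ∧ ∀ D' ⊂ D, ¬ IsDiagnosis Ent bot O B P N D'

theorem diagnosis_iff_hits_all_conflicts (Ent : Set α → α → Prop)
    (hmono : ∀ (S T : Set α) (x : α), S ⊆ T → Ent S x → Ent T x)
    (bot : α) (O B P N D : Set α) (hD : D ⊆ O) :
    IsDiagnosis Ent bot O B P N D ↔
      ∀ C, IsConflict Ent bot O B P N C → (D ∩ C).Nonempty := by
  constructor
  · rintro ⟨-, hdiag⟩ C ⟨hCO, x, hx, hent⟩
    by_contra hne
    rw [Set.not_nonempty_iff_eq_empty] at hne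
    have hsub : C ⊆ O \ D := fun a ha =>
      ⟨hCO ha, fun hd => Set.eq_empty_iff_forall_notMem.mp hne a ⟨hd, ha⟩⟩
    have hsub2 : C ∪ B ∪ P ⊆ (O \ D) ∪ B ∪ P :=
      Set.union_subset_union_left _ (Set.union_subset_union_left _ hsub)
    exact hdiag x hx (hmono _ _ _ hsub2 hent)
  · intro h
    refine ⟨hD, fun x hx hent => ?_⟩
    have : IsConflict Ent bot O B P N (O \ D) :=
      ⟨Set.diff_subset, x, hx, hent⟩
    obtain ⟨a, haD, haO, haD'⟩ := h _ this
    exact haD' haD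
end

section
/- Assuming O is finite, a set D ⊆ O is a diagnosis for a DPI if and only if D ∩ C ≠ ∅ for every minimal conflict C for the DPI. -/
open Set

variable {α : Type*}

lemma exists_minConflict_subset (Ent : Set α → α → Prop) (bot : α) (O B P N : Set α) :
    ∀ n (C : Set α), C.Finite → C.ncard ≤ n → IsConflict Ent bot O B P N C →
      ∃ C' ⊆ C, IsMinConflict Ent bot O B P N C' := by
  intro n
  induction n with
  | zero =>
    intro C hCf hcard hC
    refine ⟨C, subset_rfl, hC, fun C' hC' h' => ?_⟩
    have hCe : C = ∅ := (Set.ncard_eq_zero hCf).mp (Nat.le_zero.mp hcard)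
    rw [hCe] at hC'
    exact hC'.2 (Set.empty_subset _)
  | succ n ih =>
    intro C hCf hcard hC
    by_cases hmin : ∀ C' ⊂ C, ¬ IsConflict Ent bot O B P N C'
    · exact ⟨C, subset_rfl, hC, hmin⟩
    · push_neg at hmin
      obtain ⟨C', hC'ss, hC'⟩ := hmin
      have hC'f : C'.Finite := hCf.subset hC'ss.subset
      have hlt : C'.ncard < C.ncard := Set.ncard_lt_ncard hC'ss hCf
      obtain ⟨C'', h1, h2⟩ := ih C' hC'f (by omega) hC'
      exact ⟨C'', h1.trans hC'ss.subset, h2⟩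

theorem diagnosis_iff_hits_all_min_conflicts (Ent : Set α → α → Prop)
    (hmono : ∀ (S T : Set α) (x : α), S ⊆ T → Ent S x → Ent T x)
    (bot : α) (O B P N D : Set α) (hfin : O.Finite) (hD : D ⊆ O) :
    IsDiagnosis Ent bot O B P N D ↔
      ∀ C, IsMinConflict Ent bot O B P N C → (D ∩ C).Nonempty := by
  constructor
  · rintro ⟨-, hdiag⟩ C ⟨⟨hCO, x, hx, hent⟩, -⟩
    by_contra hempty
    rw [Set.not_nonempty_iff_eq_empty] at hempty
    have hCsub : C ⊆ O \ D := fun a ha =>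
      ⟨hCO ha, fun haD => (Set.eq_empty_iff_forall_notMem.mp hempty a) ⟨haD, ha⟩⟩
    exact hdiag x hx (hmono _ _ x (by gcongr) hent)
  · intro hhit
    refine ⟨hD, fun x hx hent => ?_⟩
    have hconf : IsConflict Ent bot O B P N (O \ D) :=
      ⟨Set.diff_subset, x, hx, hent⟩
    obtain ⟨C, hCsub, hCmin⟩ := exists_minConflict_subset Ent bot O B P N
      (O \ D).ncard (O \ D) (hfin.subset Set.diff_subset) le_rfl hconf
    obtain ⟨a, haD, haC⟩ := hhit C hCmin
    exact (hCsub haC).2 haD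
end

section
/- Assuming O is finite, D ⊆ O is a minimal diagnosis for a DPI if and only if D is a minimal hitting set of the collection of all minimal conflicts for the DPI. -/
open Set

variable {α : Type*}

/-- `X` is a hitting set of the collection `S`. -/
def IsHittingSet (S : Set (Set α)) (X : Set α) : Prop :=
  X ⊆ ⋃₀ S ∧ ∀ s ∈ S, (X ∩ s).Nonempty

/-- `X` is a minimal hitting set of the collection `S`. -/
def IsMinHittingSet (S : Set (Set α)) (X : Set α) : Prop :=
  IsHittingSet S X ∧ ∀ X' ⊂ X, ¬ IsHittingSet S X'

/-!
A set `D ⊆ O` is a diagnosis iff `O \ D` is not a conflict. By monotonicity the conflicts are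
upward closed inside `O`, and by finiteness of `O` every conflict contains a minimal one; so `D` is a
diagnosis iff it meets every minimal conflict. Minimal diagnoses and minimal hitting sets are thus
the minimal members of one family, provided a minimal diagnosis lies inside the union of the
minimal conflicts.
-/

section

variable {Ent : Set α → α → Prop} {bot : α} {O B P N : Set α}

lemma IsConflict.exists_isMinConflict_subset (hO : O.Finite) {C : Set α}
    (hC : IsConflict Ent bot O B P N C) : ∃ C' ⊆ C, IsMinConflict Ent bot O B P N C' := by
  have hfin : {C | IsConflict Ent bot O B P N C}.Finite :=
    hO.finite_subsets.subset fun _ h => h.1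
  obtain ⟨C', hC'C, hmin⟩ := hfin.isPWO.exists_le_minimal hC
  exact ⟨C', hC'C, minimal_iff_forall_lt.mp hmin⟩

lemma IsConflict.mono (hmono : ∀ (S T : Set α) (x : α), S ⊆ T → Ent S x → Ent T x)
    {C C' : Set α} (hC : IsConflict Ent bot O B P N C) (hCC' : C ⊆ C') (hC'O : C' ⊆ O) :
    IsConflict Ent bot O B P N C' := by
  obtain ⟨-, x, hx, hent⟩ := hC
  exact ⟨hC'O, x, hx, hmono _ _ x (by gcongr) hent⟩

lemma isDiagnosis_iff_not_isConflict_diff {D : Set α} (hD : D ⊆ O) :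
    IsDiagnosis Ent bot O B P N D ↔ ¬ IsConflict Ent bot O B P N (O \ D) := by
  simp [IsDiagnosis, IsConflict, hD]

lemma isDiagnosis_iff_forall_isMinConflict_inter_nonempty
    (hmono : ∀ (S T : Set α) (x : α), S ⊆ T → Ent S x → Ent T x) (hO : O.Finite)
    {D : Set α} (hD : D ⊆ O) :
    IsDiagnosis Ent bot O B P N D ↔
      ∀ C ∈ {C | IsMinConflict Ent bot O B P N C}, (D ∩ C).Nonempty := by
  rw [isDiagnosis_iff_not_isConflict_diff hD]
  constructor
  · intro hdiag C hC
    by_contra hdisj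
    exact hdiag (hC.1.mono hmono (fun c hc => ⟨hC.1.1 hc, fun hcD => hdisj ⟨c, hcD, hc⟩⟩)
      sdiff_subset)
  · intro hhit hconf
    obtain ⟨C, hCsub, hC⟩ := hconf.exists_isMinConflict_subset hO
    obtain ⟨c, hcD, hcC⟩ := hhit C hC
    exact (hCsub hcC).2 hcD

/-- For `d ∈ D`, the set `D \ {d}` is not a diagnosis, so `O \ (D \ {d})` contains a minimal
conflict; that conflict meets `D`, and can only do so in `d`. -/
lemma IsMinDiagnosis.subset_sUnion_isMinConflict
    (hmono : ∀ (S T : Set α) (x : α), S ⊆ T → Ent S x → Ent T x) (hO : O.Finite)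
    {D : Set α} (hD : IsMinDiagnosis Ent bot O B P N D) :
    D ⊆ ⋃₀ {C | IsMinConflict Ent bot O B P N C} := by
  intro d hd
  have hDO : D ⊆ O := hD.1.1
  have hconf : IsConflict Ent bot O B P N (O \ (D \ {d})) :=
    (isDiagnosis_iff_not_isConflict_diff (sdiff_subset.trans hDO)).not_left.mp
      (hD.2 _ (sdiff_singleton_ssubset.mpr hd))
  obtain ⟨C, hCsub, hC⟩ := hconf.exists_isMinConflict_subset hO
  obtain ⟨e, heD, heC⟩ :=
    (isDiagnosis_iff_forall_isMinConflict_inter_nonempty hmono hO hDO).mp hD.1 C hC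
  have hed : e = d := by
    by_contra hne
    exact (hCsub heC).2 ⟨heD, hne⟩
  exact ⟨C, hC, hed ▸ heC⟩

end

theorem min_diagnosis_iff_min_hitting_set_general (Ent : Set α → α → Prop)
    (hmono : ∀ (S T : Set α) (x : α), S ⊆ T → Ent S x → Ent T x)
    (bot : α) (O B P N D : Set α) (hfin : O.Finite) :
    IsMinDiagnosis Ent bot O B P N D ↔
      IsMinHittingSet {C | IsMinConflict Ent bot O B P N C} D := by
  have hdiag_iff := fun {X : Set α} (hX : X ⊆ O) =>
    isDiagnosis_iff_forall_isMinConflict_inter_nonempty (bot := bot) (B := B) (P := P) (N := N)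
      hmono hfin hX
  constructor
  · intro hD
    refine ⟨⟨hD.subset_sUnion_isMinConflict hmono hfin, (hdiag_iff hD.1.1).mp hD.1⟩, ?_⟩
    rintro X hXD ⟨-, hX⟩
    exact hD.2 X hXD ((hdiag_iff (hXD.subset.trans hD.1.1)).mpr hX)
  · rintro ⟨⟨hDS, hD⟩, hmin⟩
    have hDO : D ⊆ O := hDS.trans (sUnion_subset fun C hC => hC.1.1)
    refine ⟨(hdiag_iff hDO).mpr hD, fun X hXD hX => hmin X hXD ?_⟩
    exact ⟨hXD.subset.trans hDS, (hdiag_iff hX.1).mp hX⟩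

theorem min_diagnosis_iff_min_hitting_set (Ent : Set α → α → Prop)
    (hmono : ∀ (S T : Set α) (x : α), S ⊆ T → Ent S x → Ent T x)
    (bot : α) (O B P N D : Set α) (hfin : O.Finite) (hD : D ⊆ O) :
    IsMinDiagnosis Ent bot O B P N D ↔
      IsMinHittingSet {C | IsMinConflict Ent bot O B P N C} D :=
  min_diagnosis_iff_min_hitting_set_general Ent hmono bot O B P N D hfin
end

section
/- Every minimal diagnosis for an extended DPI is equal to or a proper superset of some minimal diagnosis for the original DPI (assuming O finite). -/
open Set

variable {α : Type*}

section Diagnosis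

variable {Ent : Set α → α → Prop} {bot : α} {O B P N D : Set α}

theorem isMinDiagnosis_iff_minimal :
    IsMinDiagnosis Ent bot O B P N D ↔ Minimal (IsDiagnosis Ent bot O B P N) D :=
  minimal_iff_forall_lt.symm

theorem IsDiagnosis.mono_tests (hmono : ∀ (S T : Set α) (x : α), S ⊆ T → Ent S x → Ent T x)
    {P' N' : Set α} (hP : P ⊆ P') (hN : N ⊆ N') (hD : IsDiagnosis Ent bot O B P' N' D) :
    IsDiagnosis Ent bot O B P N D :=
  ⟨hD.1, fun x hx hent =>
    hD.2 x (union_subset_union_left _ hN hx)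
      (hmono _ _ x (union_subset_union_right _ hP) hent)⟩

theorem IsDiagnosis.exists_isMinDiagnosis_subset (hfin : O.Finite)
    (hD : IsDiagnosis Ent bot O B P N D) :
    ∃ D' ⊆ D, IsMinDiagnosis Ent bot O B P N D' := by
  have hdiag_fin : {E | IsDiagnosis Ent bot O B P N E}.Finite :=
    hfin.finite_subsets.subset fun _ hE => hE.1
  obtain ⟨D', hD'D, hmin⟩ := hdiag_fin.isPWO.exists_le_minimal hD
  exact ⟨D', hD'D, isMinDiagnosis_iff_minimal.2 hmin⟩

end Diagnosis

theorem min_diagnosis_extended_contains_min_diagnosis_original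
    (Ent : Set α → α → Prop)
    (hmono : ∀ (S T : Set α) (x : α), S ⊆ T → Ent S x → Ent T x)
    (bot : α) (O B P N P' N' D : Set α) (hfin : O.Finite)
    (hD : IsMinDiagnosis Ent bot O B (P ∪ P') (N ∪ N') D) :
    ∃ D', IsMinDiagnosis Ent bot O B P N D' ∧ D' ⊆ D := by
  obtain ⟨D', hD'D, hmin⟩ :=
    (hD.1.mono_tests hmono subset_union_left subset_union_left).exists_isMinDiagnosis_subset hfin
  exact ⟨D', hmin, hD'D⟩
end
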